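/- arXiv:0909.0922 — 2 statements merged into one kernel-verified Lean document; each statement's English description precedes it below -/
import Mathlib

section
/- Mertens' first theorem: Σ_{p≤N, p prime} (log p)/p = log N + O(1). -/
/-!
Legendre's formula writes `log N! = ∑_{p ≤ N} v_p(N!) log p`, and `N/p - 1 ≤ v_p(N!) ≤ N/(p - 1)`.
Since `log N! = N log N + O(N)`, the lower bound on `v_p` together with Chebyshev's estimate
`θ(N) ≤ N log 4` gives `∑_{p ≤ N} log p / p ≤ log N + O(1)`, while the upper bound, with
`1/(p - 1) = 1/p + 1/(p(p - 1))` and the convergence of `∑ log n / (n(n - 1))`, gives the reverse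
inequality.
-/

open Finset Real
open scoped Nat

theorem Nat.primeFactors_factorial (n : ℕ) : (n !).primeFactors = Nat.primesLE n := by
  ext p
  simp only [Nat.mem_primeFactors, Nat.mem_primesLE]
  exact ⟨fun ⟨hp, hdvd, _⟩ ↦ ⟨hp.dvd_factorial.mp hdvd, hp⟩,
    fun ⟨hpn, hp⟩ ↦ ⟨hp, hp.dvd_factorial.mpr hpn, n.factorial_ne_zero⟩⟩

theorem log_factorial_eq_sum_factorization_mul_log (n : ℕ) :
    log (n ! : ℝ) = ∑ p ∈ Nat.primesLE n, (n !).factorization p * log p := by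
  rw [log_nat_eq_sum_factorization, Finsupp.sum, Nat.support_factorization,
    Nat.primeFactors_factorial]

theorem Nat.div_le_factorization_factorial {p : ℕ} (hp : p.Prime) (n : ℕ) :
    n / p ≤ (n !).factorization p := by
  have : Fact p.Prime := ⟨hp⟩
  rw [Nat.factorization_def _ hp, padicValNat_factorial (b := Nat.log p n + 2) (by omega)]
  simpa using single_le_sum (f := fun i ↦ n / p ^ i) (fun _ _ ↦ Nat.zero_le _)
    (by simp : 1 ∈ Ico 1 (Nat.log p n + 2))

theorem Nat.sub_one_mul_factorization_factorial_le {p : ℕ} (hp : p.Prime) (n : ℕ) :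
    ((p : ℝ) - 1) * (n !).factorization p ≤ n := by
  have : Fact p.Prime := ⟨hp⟩
  have h := sub_one_mul_padicValNat_factorial (p := p) n
  rw [← Nat.factorization_def _ hp] at h
  have : (p - 1) * (n !).factorization p ≤ n := h ▸ Nat.sub_le _ _
  rw [← Nat.cast_one, ← Nat.cast_sub hp.one_le]
  exact_mod_cast this

theorem log_factorial_le_mul_log (n : ℕ) : log (n ! : ℝ) ≤ n * log n := by
  rcases n.eq_zero_or_pos with rfl | hn
  · simp
  rw [← log_pow]
  exact log_le_log (by positivity) (by exact_mod_cast n.factorial_le_pow)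

theorem mul_log_sub_le_log_factorial (n : ℕ) : n * log n - n ≤ log (n ! : ℝ) := by
  rcases n.eq_zero_or_pos with rfl | hn
  · simp
  have h := log_le_log (by positivity) (Real.pow_div_factorial_le_exp (n : ℝ) n.cast_nonneg n)
  rw [log_div (by positivity) (by positivity), log_pow, log_exp] at h
  linarith

theorem mul_sum_log_div_sub_theta_le_log_factorial (n : ℕ) :
    n * ∑ p ∈ Nat.primesLE n, log p / p - Chebyshev.theta n ≤ log (n ! : ℝ) := by
  rw [Chebyshev.theta_eq_sum_primesLE_log, mul_sum, ← sum_sub_distrib,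
    log_factorial_eq_sum_factorization_mul_log]
  refine sum_le_sum fun p hp ↦ ?_
  have hp := Nat.prime_of_mem_primesLE hp
  have hval : (n : ℝ) / p - 1 ≤ (n !).factorization p :=
    calc (n : ℝ) / p - 1 ≤ ⌊(n : ℝ) / p⌋₊ := (Nat.sub_one_lt_floor _).le
      _ = (n / p : ℕ) := by rw [Nat.floor_div_eq_div]
      _ ≤ (n !).factorization p := by exact_mod_cast Nat.div_le_factorization_factorial hp n
  calc (n : ℝ) * (log p / p) - log p = ((n : ℝ) / p - 1) * log p := by ring
    _ ≤ (n !).factorization p * log p := by gcongr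

theorem log_factorial_le_mul_sum (n : ℕ) :
    log (n ! : ℝ) ≤
      n * (∑ p ∈ Nat.primesLE n, log p / p + ∑ p ∈ Nat.primesLE n, log p / (p * (p - 1))) := by
  rw [← sum_add_distrib, mul_sum, log_factorial_eq_sum_factorization_mul_log]
  refine sum_le_sum fun p hp ↦ ?_
  have hp := Nat.prime_of_mem_primesLE hp
  have hp1 : (1 : ℝ) < p := by exact_mod_cast hp.one_lt
  have hval : ((n !).factorization p : ℝ) ≤ n / (p - 1) := by
    rw [le_div_iff₀ (by linarith), mul_comm]
    exact Nat.sub_one_mul_factorization_factorial_le hp n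
  calc ((n !).factorization p : ℝ) * log p ≤ n / (p - 1) * log p := by gcongr
    _ = n * (log p / p + log p / (p * (p - 1))) := by
        field_simp [(by linarith : (p : ℝ) - 1 ≠ 0)]
        ring

theorem log_div_mul_sub_one_le {x : ℝ} (hx : 2 ≤ x) :
    log x / (x * (x - 1)) ≤ 4 * x ^ (-3 / 2 : ℝ) := by
  have hx0 : 0 < x := by linarith
  have hsqrt : x ^ (-3 / 2 : ℝ) = x ^ (1 / 2 : ℝ) / x ^ 2 := by
    rw [← rpow_natCast, ← rpow_sub hx0]; norm_num
  rw [hsqrt, div_le_iff₀ (by nlinarith)]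
  have hlog := log_le_rpow_div hx0.le (by norm_num : (0 : ℝ) < 1 / 2)
  have hpos : 0 ≤ x ^ (1 / 2 : ℝ) := by positivity
  calc log x ≤ 2 * x ^ (1 / 2 : ℝ) := by linarith
    _ ≤ 4 * (x ^ (1 / 2 : ℝ) / x ^ 2) * (x * (x - 1)) := by
        rw [div_eq_mul_inv]; field_simp; nlinarith

theorem log_div_mul_sub_one_nonneg (n : ℕ) : 0 ≤ log n / (n * (n - 1) : ℝ) := by
  refine div_nonneg (log_natCast_nonneg n) ?_
  rcases n with _ | n
  · simp
  · push_cast; simp only [add_sub_cancel_right]; positivity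

theorem summable_log_div_mul_sub_one : Summable fun n : ℕ ↦ log n / (n * (n - 1) : ℝ) := by
  refine ((Real.summable_nat_rpow.mpr (by norm_num : (-3 / 2 : ℝ) < -1)).mul_left 4).of_nonneg_of_le
    log_div_mul_sub_one_nonneg fun n ↦ ?_
  rcases lt_or_ge n 2 with hn | hn
  · interval_cases n <;> simp
  · exact log_div_mul_sub_one_le (by exact_mod_cast hn)

theorem sum_log_div_sub_log_le {n : ℕ} (hn : 0 < n) :
    ∑ p ∈ Nat.primesLE n, log p / p - log n ≤ log 4 := by
  have hn' : (0 : ℝ) < n := by exact_mod_cast hn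
  have hlower := mul_sum_log_div_sub_theta_le_log_factorial n
  have htheta := Chebyshev.theta_le_log4_mul_x hn'.le
  have hupper := log_factorial_le_mul_log n
  refine le_of_mul_le_mul_left ?_ hn'
  linarith

theorem log_sub_sum_log_div_le {n : ℕ} (hn : 0 < n) :
    log n - ∑ p ∈ Nat.primesLE n, log p / p ≤ 1 + ∑' m : ℕ, log m / (m * (m - 1) : ℝ) := by
  have hn' : (0 : ℝ) < n := by exact_mod_cast hn
  have hlower := mul_log_sub_le_log_factorial n
  have hupper := log_factorial_le_mul_sum n
  have htail : ∑ p ∈ Nat.primesLE n, log p / (p * (p - 1) : ℝ) ≤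
      ∑' m : ℕ, log m / (m * (m - 1) : ℝ) :=
    summable_log_div_mul_sub_one.sum_le_tsum _ fun m _ ↦ log_div_mul_sub_one_nonneg m
  have htail' := mul_le_mul_of_nonneg_left htail hn'.le
  refine le_of_mul_le_mul_left ?_ hn'
  linarith

theorem mertens_first :
    ∃ C : ℝ, 0 < C ∧ ∀ N : ℕ, 2 ≤ N →
      |(∑ p ∈ (Finset.Icc 1 N).filter Nat.Prime, Real.log p / p) - Real.log N| ≤ C := by
  set K := ∑' m : ℕ, log m / (m * (m - 1) : ℝ)
  have hK : 0 ≤ K := tsum_nonneg log_div_mul_sub_one_nonneg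
  have hlog4 : 0 < log 4 := log_pos (by norm_num)
  refine ⟨log 4 + 1 + K, by positivity, fun N hN ↦ ?_⟩
  rw [← Nat.primesLE_eq_filter_Icc_one, abs_le]
  have hN₀ : 0 < N := by omega
  constructor <;> linarith [sum_log_div_sub_log_le hN₀, log_sub_sum_log_div_le hN₀]
end

section
/- Erdős's multiplication table theorem (weak form): the number of integers n ≤ N² expressible as n = a·b with 1 ≤ a, b ≤ N is o(N²) as N → ∞. -/
open Finset Filter
open scoped Classical

/-!
Let `S = ∑_{p < N} 1/p` and `ω(n) = #{p < N prime : p ∣ n}`. The Turán–Kubilius inequality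
`∑_{n ≤ x} (ω(n) - S)² ≤ 3xS` (for `x ≥ N`) and Chebyshev's inequality show that
`|ω(n) - S| < S/4` for all but `O(N²/S)` integers `n ≤ N²`, and `ω(a) > 3S/4` for all but
`O(N/S)` integers `a ≤ N`. Since `ω(ab) ≥ ω(a) + ω(b) - ω(gcd(a, b))` and
`∑_{a, b ≤ N} ω(gcd(a, b)) ≤ N² ∑_p 1/p²`, all but `O(N²/S)` products `ab` with
`a, b ≤ N` satisfy `ω(ab) > 5S/4`. Hence the multiplication table has `O(N²/S)` elements,
and `S → ∞` because `∑_p 1/p` diverges.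
-/

def dvdCount (P : Finset ℕ) (n : ℕ) : ℕ := #{p ∈ P | p ∣ n}

section Markov

variable {α : Type*}

theorem card_filter_mul_le_sum {s : Finset α} {f : α → ℝ} (hf : ∀ a ∈ s, 0 ≤ f a)
    (t : ℝ) : #{a ∈ s | t ≤ f a} * t ≤ ∑ a ∈ s, f a :=
  calc #{a ∈ s | t ≤ f a} * t = ∑ _a ∈ {a ∈ s | t ≤ f a}, t := by
        rw [sum_const, nsmul_eq_mul]
    _ ≤ ∑ a ∈ {a ∈ s | t ≤ f a}, f a := sum_le_sum fun a ha => (mem_filter.1 ha).2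
    _ ≤ ∑ a ∈ s, f a :=
        sum_le_sum_of_subset_of_nonneg (filter_subset _ _) fun a ha _ => hf a ha

theorem card_filter_mul_sq_le_sum_sq (s : Finset α) (f : α → ℝ) (c : ℝ) {t : ℝ}
    (ht : 0 ≤ t) :
    #{a ∈ s | t ≤ |f a - c|} * t ^ 2 ≤ ∑ a ∈ s, (f a - c) ^ 2 := by
  have hsub : {a ∈ s | t ≤ |f a - c|} ⊆ {a ∈ s | t ^ 2 ≤ (f a - c) ^ 2} :=
    monotone_filter_right s fun a _ h => sq_le_sq.2 (by rwa [abs_of_nonneg ht])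
  calc #{a ∈ s | t ≤ |f a - c|} * t ^ 2 ≤ #{a ∈ s | t ^ 2 ≤ (f a - c) ^ 2} * t ^ 2 := by
        gcongr
    _ ≤ ∑ a ∈ s, (f a - c) ^ 2 := card_filter_mul_le_sum (fun a _ => sq_nonneg _) _

end Markov

section DvdCount

variable (P : Finset ℕ)

lemma card_filter_dvd_Icc (x d : ℕ) : #{n ∈ Icc 1 x | d ∣ n} = x / d :=
  Nat.Ioc_filter_dvd_card_eq_div x d

lemma sum_dvdCount_Icc (x : ℕ) : ∑ n ∈ Icc 1 x, dvdCount P n = ∑ p ∈ P, x / p := by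
  simp only [dvdCount, card_filter]
  rw [sum_comm]
  simp only [← card_filter, card_filter_dvd_Icc]

lemma sum_dvdCount_sq_Icc (x : ℕ) :
    ∑ n ∈ Icc 1 x, dvdCount P n ^ 2 = ∑ p ∈ P, ∑ q ∈ P, x / Nat.lcm p q := by
  simp only [dvdCount, card_filter, sq, sum_mul_sum, ite_zero_mul_ite_zero, mul_one,
    ← Nat.lcm_dvd_iff]
  rw [sum_comm]
  refine sum_congr rfl fun p _ => ?_
  rw [sum_comm]
  simp only [← card_filter, card_filter_dvd_Icc]

lemma sum_sum_dvdCount_gcd_Icc (x : ℕ) :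
    ∑ a ∈ Icc 1 x, ∑ b ∈ Icc 1 x, dvdCount P (Nat.gcd a b) = ∑ p ∈ P, (x / p) ^ 2 := by
  simp only [dvdCount, ← card_filter_dvd_Icc, sq, card_filter, sum_mul_sum, Nat.dvd_gcd_iff,
    ite_zero_mul_ite_zero, mul_one]
  refine (sum_congr rfl fun a _ => sum_comm).trans ?_
  rw [sum_comm]

lemma dvdCount_add_le (a b : ℕ) :
    dvdCount P a + dvdCount P b ≤ dvdCount P (a * b) + dvdCount P (Nat.gcd a b) := by
  rw [dvdCount, dvdCount, ← card_union_add_card_inter, ← filter_or, ← filter_and]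
  simp only [dvdCount, Nat.dvd_gcd_iff]
  gcongr with p _
  rintro (h | h)
  exacts [h.mul_right b, h.mul_left a]

lemma sum_dvdCount_Icc_ge (x : ℕ) :
    x * ∑ p ∈ P, (p : ℝ)⁻¹ - #P ≤ ∑ n ∈ Icc 1 x, (dvdCount P n : ℝ) := by
  have h : ∑ n ∈ Icc 1 x, (dvdCount P n : ℝ) = ∑ p ∈ P, ((x / p : ℕ) : ℝ) := by
    exact_mod_cast sum_dvdCount_Icc P x
  rw [h, mul_sum, card_eq_sum_ones, Nat.cast_sum, ← sum_sub_distrib]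
  refine sum_le_sum fun p _ => ?_
  rw [← Nat.floor_div_eq_div (K := ℝ), Nat.cast_one, ← div_eq_mul_inv]
  exact (Nat.sub_one_lt_floor _).le

lemma sum_sum_dvdCount_gcd_Icc_le (x : ℕ) :
    ∑ a ∈ Icc 1 x, ∑ b ∈ Icc 1 x, (dvdCount P (Nat.gcd a b) : ℝ) ≤
      x ^ 2 * ∑ p ∈ P, ((p : ℝ) ^ 2)⁻¹ := by
  have h : ∑ a ∈ Icc 1 x, ∑ b ∈ Icc 1 x, (dvdCount P (Nat.gcd a b) : ℝ) =
      ∑ p ∈ P, ((x / p : ℕ) : ℝ) ^ 2 := by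
    exact_mod_cast sum_sum_dvdCount_gcd_Icc P x
  rw [h, mul_sum]
  gcongr with p
  calc ((x / p : ℕ) : ℝ) ^ 2 ≤ ((x : ℝ) / p) ^ 2 := by gcongr; exact Nat.cast_div_le
    _ = _ := by ring

variable {P}

lemma sum_dvdCount_sq_Icc_le (hP : ∀ p ∈ P, p.Prime) (x : ℕ) :
    ∑ n ∈ Icc 1 x, (dvdCount P n : ℝ) ^ 2 ≤
      x * (∑ p ∈ P, (p : ℝ)⁻¹) ^ 2 + x * ∑ p ∈ P, (p : ℝ)⁻¹ := by
  have h : ∑ n ∈ Icc 1 x, (dvdCount P n : ℝ) ^ 2 =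
      ∑ p ∈ P, ∑ q ∈ P, ((x / Nat.lcm p q : ℕ) : ℝ) := by
    exact_mod_cast sum_dvdCount_sq_Icc P x
  have hterm : ∀ p ∈ P, ∀ q ∈ P, ((x / Nat.lcm p q : ℕ) : ℝ) ≤
      x * (p : ℝ)⁻¹ * (q : ℝ)⁻¹ + if p = q then x * (p : ℝ)⁻¹ else 0 := by
    intro p hp q hq
    by_cases hpq : p = q
    · subst hpq
      rw [Nat.lcm_self, if_pos rfl]
      calc _ ≤ (x : ℝ) / p := Nat.cast_div_le
        _ ≤ _ := by
          rw [div_eq_mul_inv]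
          linarith [show 0 ≤ (x : ℝ) * (p : ℝ)⁻¹ * (p : ℝ)⁻¹ by positivity]
    · rw [if_neg hpq, add_zero, ((Nat.coprime_primes (hP p hp) (hP q hq)).2 hpq).lcm_eq_mul]
      calc _ ≤ (x : ℝ) / (p * q : ℕ) := Nat.cast_div_le
        _ = _ := by push_cast; ring
  rw [h]
  refine (sum_le_sum fun p hp => sum_le_sum fun q hq => hterm p hp q hq).trans_eq ?_
  simp only [sum_add_distrib, sum_ite_eq, sum_ite_mem, inter_self, ← mul_sum, ← sum_mul]
  ring

theorem sum_sq_dvdCount_sub_le (hP : ∀ p ∈ P, p.Prime) (x : ℕ) :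
    ∑ n ∈ Icc 1 x, ((dvdCount P n : ℝ) - ∑ p ∈ P, (p : ℝ)⁻¹) ^ 2 ≤
      (x + 2 * #P) * ∑ p ∈ P, (p : ℝ)⁻¹ := by
  set S := ∑ p ∈ P, (p : ℝ)⁻¹
  have hS : 0 ≤ S := sum_nonneg fun p _ => by positivity
  have h₁ := sum_dvdCount_sq_Icc_le hP x
  have h₂ := mul_le_mul_of_nonneg_left (sum_dvdCount_Icc_ge P x) (by positivity : 0 ≤ 2 * S)
  have expand : ∑ n ∈ Icc 1 x, ((dvdCount P n : ℝ) - S) ^ 2 =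
      ∑ n ∈ Icc 1 x, (dvdCount P n : ℝ) ^ 2 - 2 * S * ∑ n ∈ Icc 1 x, (dvdCount P n : ℝ)
        + x * S ^ 2 := by
    simp only [sub_sq, sum_add_distrib, sum_sub_distrib, sum_const, Nat.card_Icc, ← sum_mul,
      ← mul_sum, nsmul_eq_mul, add_tsub_cancel_right]
    ring
  rw [expand]
  linarith

end DvdCount

section MultiplicationTable

noncomputable def mulTable (N : ℕ) : Finset ℕ :=
  (Icc 1 (N ^ 2)).filter fun n => ∃ a ∈ Icc 1 N, ∃ b ∈ Icc 1 N, n = a * b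

variable (P : Finset ℕ) (S : ℝ)

noncomputable def atypical (s : Finset ℕ) : Finset ℕ :=
  {n ∈ s | S / 4 ≤ |(dvdCount P n : ℝ) - S|}

lemma le_abs_dvdCount_sub_or (a b : ℕ) :
    S / 4 ≤ |(dvdCount P (a * b) : ℝ) - S| ∨ S / 4 ≤ |(dvdCount P a : ℝ) - S| ∨
      S / 4 ≤ |(dvdCount P b : ℝ) - S| ∨ S / 4 ≤ dvdCount P (Nat.gcd a b) := by
  by_contra! h
  obtain ⟨hab, ha, hb, hgcd⟩ := h
  have hadd : (dvdCount P a + dvdCount P b : ℝ) ≤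
      dvdCount P (a * b) + dvdCount P (Nat.gcd a b) := by
    exact_mod_cast dvdCount_add_le P a b
  rw [abs_lt] at hab ha hb
  linarith [hab.2, ha.1, hb.1]

lemma card_mulTable_le (N : ℕ) :
    #(mulTable N) ≤ #(atypical P S (Icc 1 (N ^ 2))) + 2 * N * #(atypical P S (Icc 1 N)) +
      #{ab ∈ Icc 1 N ×ˢ Icc 1 N | S / 4 ≤ (dvdCount P (Nat.gcd ab.1 ab.2) : ℝ)} := by
  set I := Icc 1 N
  set B := atypical P S I
  set G := {ab ∈ I ×ˢ I | S / 4 ≤ (dvdCount P (Nat.gcd ab.1 ab.2) : ℝ)}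
  have hsub : mulTable N ⊆ atypical P S (Icc 1 (N ^ 2)) ∪
      (B ×ˢ I ∪ I ×ˢ B ∪ G).image fun ab => ab.1 * ab.2 := by
    intro n hn
    simp only [mulTable, mem_filter] at hn
    obtain ⟨hn, a, ha, b, hb, rfl⟩ := hn
    rcases le_abs_dvdCount_sub_or P S a b with h | h | h | h
    · exact mem_union_left _ (mem_filter.2 ⟨hn, h⟩)
    all_goals
      refine mem_union_right _ (mem_image.2 ⟨(a, b), ?_, rfl⟩)
      simp [I, B, G, atypical, ha, hb, h]
  calc #(mulTable N)
      ≤ #(atypical P S (Icc 1 (N ^ 2))) + #(B ×ˢ I ∪ I ×ˢ B ∪ G) :=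
        (card_le_card hsub).trans ((card_union_le _ _).trans (by gcongr; exact card_image_le))
    _ ≤ #(atypical P S (Icc 1 (N ^ 2))) + (#(B ×ˢ I) + #(I ×ˢ B) + #G) := by
      gcongr
      exact (card_union_le _ _).trans (by gcongr; exact card_union_le _ _)
    _ = _ := by simp only [I, card_product, Nat.card_Icc, add_tsub_cancel_right]; ring

variable {P}

theorem card_mulTable_mul_le (hP : ∀ p ∈ P, p.Prime) {N : ℕ} (hPN : #P ≤ N) :
    #(mulTable N) * ∑ p ∈ P, (p : ℝ)⁻¹ ≤
      (144 + 4 * ∑ p ∈ P, ((p : ℝ) ^ 2)⁻¹) * N ^ 2 := by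
  set S := ∑ p ∈ P, (p : ℝ)⁻¹
  have hS₀ : 0 ≤ S := sum_nonneg fun p _ => by positivity
  rcases hS₀.eq_or_lt with hS | hS
  · rw [← hS, mul_zero]
    positivity
  set B₁ := atypical P S (Icc 1 (N ^ 2))
  set B₂ := atypical P S (Icc 1 N)
  set G := {ab ∈ Icc 1 N ×ˢ Icc 1 N | S / 4 ≤ (dvdCount P (Nat.gcd ab.1 ab.2) : ℝ)}
  have hPN' : (#P : ℝ) ≤ N := by exact_mod_cast hPN
  have hNN : (N : ℝ) ≤ N ^ 2 := by exact_mod_cast Nat.le_self_pow two_ne_zero N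
  have h₁ : #B₁ * (S / 4) ^ 2 ≤ 3 * N ^ 2 * S := by
    refine (card_filter_mul_sq_le_sum_sq _ _ _ (by positivity)).trans
      ((sum_sq_dvdCount_sub_le hP _).trans ?_)
    push_cast
    nlinarith
  have h₂ : #B₂ * (S / 4) ^ 2 ≤ 3 * N * S :=
    (card_filter_mul_sq_le_sum_sq _ _ _ (by positivity)).trans
      ((sum_sq_dvdCount_sub_le hP _).trans (by nlinarith))
  have hG : #G * (S / 4) ≤ N ^ 2 * ∑ p ∈ P, ((p : ℝ) ^ 2)⁻¹ := by
    refine (card_filter_mul_le_sum (fun _ _ => Nat.cast_nonneg _) _).trans ?_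
    rw [sum_product]
    exact sum_sum_dvdCount_gcd_Icc_le P N
  have e₁ : #B₁ * S ≤ 48 * N ^ 2 :=
    le_of_mul_le_mul_right (by linear_combination 16 * h₁) hS
  have e₂ : #B₂ * S ≤ 48 * N := le_of_mul_le_mul_right (by linear_combination 16 * h₂) hS
  have e₂' := mul_le_mul_of_nonneg_left e₂ (by positivity : (0 : ℝ) ≤ 2 * N)
  have hcard : (#(mulTable N) : ℝ) ≤ #B₁ + 2 * N * #B₂ + #G := by
    exact_mod_cast card_mulTable_le P S N
  calc _ ≤ (#B₁ + 2 * N * #B₂ + #G : ℝ) * S := by gcongr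
    _ ≤ _ := by linarith

end MultiplicationTable

lemma tendsto_sum_inv_primesBelow :
    Tendsto (fun N => ∑ p ∈ Nat.primesBelow N, (p : ℝ)⁻¹) atTop atTop := by
  refine ((not_summable_iff_tendsto_nat_atTop_of_nonneg fun n => ?_).1
    not_summable_one_div_on_primes).congr fun N => ?_
  · exact Set.indicator_nonneg (fun _ _ => by positivity) n
  · simp [Nat.primesBelow, sum_filter, Set.indicator_apply]

theorem erdos_multiplication_table_weak :
    Tendsto (fun N : ℕ =>
        (((Finset.Icc 1 (N ^ 2)).filter (fun n =>
            ∃ a ∈ Finset.Icc 1 N, ∃ b ∈ Finset.Icc 1 N, n = a * b)).card : ℝ) / (N : ℝ) ^ 2)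
      atTop (nhds 0) := by
  set C := ∑' n : ℕ, ((n : ℝ) ^ 2)⁻¹
  have hC (N : ℕ) : ∑ p ∈ Nat.primesBelow N, ((p : ℝ) ^ 2)⁻¹ ≤ C :=
    (Real.summable_nat_pow_inv.2 one_lt_two).sum_le_tsum _ fun _ _ => by positivity
  have hS := tendsto_sum_inv_primesBelow
  refine squeeze_zero' (Eventually.of_forall fun N => by positivity) ?_
    (hS.const_div_atTop (144 + 4 * C))
  filter_upwards [hS.eventually_gt_atTop 0, eventually_gt_atTop 0] with N hSN hN
  have hPN : #(Nat.primesBelow N) ≤ N := (card_filter_le _ _).trans (card_range N).le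
  rw [div_le_div_iff₀ (by positivity) hSN]
  calc (#(mulTable N) : ℝ) * ∑ p ∈ Nat.primesBelow N, (p : ℝ)⁻¹
      ≤ (144 + 4 * ∑ p ∈ Nat.primesBelow N, ((p : ℝ) ^ 2)⁻¹) * N ^ 2 :=
        card_mulTable_mul_le (fun _ => Nat.prime_of_mem_primesBelow) hPN
    _ ≤ _ := by gcongr; exact hC N
end
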